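/- Let A be a densely defined closed C-symmetric operator, B = CAC. The operator S_{B*} := A*C restricted to M_{B*} = N(I + A*CA*C) is an anti-unitary anti-involution on M_{B*} with respect to the graph inner product of H_{B*}; that is, S_{B*} is conjugate-linear, norm-preserving in H_{B*}-norm, maps M_{B*} onto itself, and satisfies S_{B*}² = −I on M_{B*}. -/

import Mathlib

/-!
Write `S = SBfun C A`, so that `S g = A* C g` and `B* g = C (S g)`. Unfolding the definition,
`g ∈ N(I + A*CA*C)` says exactly that `S (S g) = -g`. Everything then follows from the
conjugate-linearity of `S` and the fact that `C` is isometric: `S` maps the kernel into itself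
because `S (S (S g)) = S (-g) = -S g`; it is onto because `m = S (S (S (S m)))`; and both sides of
the norm identity equal `‖g‖² + ‖S g‖²`.
-/

open scoped InnerProductSpace
open LinearPMap

variable {H : Type*} [NormedAddCommGroup H] [InnerProductSpace ℂ H]

/-- A conjugation on a complex inner product space: a conjugate-linear involution
satisfying `⟪Cx, Cy⟫ = ⟪y, x⟫`. -/
structure Conjugation (H : Type*) [NormedAddCommGroup H] [InnerProductSpace ℂ H] where
  toFun : H → H
  map_add' : ∀ x y, toFun (x + y) = toFun x + toFun y
  map_smulc : ∀ (c : ℂ) (x : H), toFun (c • x) = (starRingEnd ℂ c) • toFun x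
  invol : ∀ x, toFun (toFun x) = x
  inner_conj : ∀ x y, ⟪toFun x, toFun y⟫_ℂ = ⟪y, x⟫_ℂ

namespace Conjugation

instance : CoeFun (Conjugation H) fun _ => H → H := ⟨toFun⟩

lemma map_zero (C : Conjugation H) : C 0 = 0 := by
  have := C.map_smulc 0 0; simpa using this

lemma mem_of_mem_image (C : Conjugation H) {S : Set H} {x : H} (hx : x ∈ C.toFun '' S) :
    C x ∈ S := by
  obtain ⟨t, ht, rfl⟩ := hx
  rwa [C.invol]

/-- The image `C(D)` of a subspace under a conjugation, as a subspace. -/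
def conjDomain (C : Conjugation H) (D : Submodule ℂ H) : Submodule ℂ H where
  carrier := C.toFun '' (D : Set H)
  add_mem' := by
    rintro a b ⟨x, hx, rfl⟩ ⟨y, hy, rfl⟩
    exact ⟨x + y, D.add_mem hx hy, (C.map_add' x y).symm ▸ rfl⟩
  zero_mem' := ⟨0, D.zero_mem, C.map_zero⟩
  smul_mem' := by
    rintro c a ⟨x, hx, rfl⟩
    refine ⟨(starRingEnd ℂ c) • x, D.smul_mem _ hx, ?_⟩
    rw [C.map_smulc]; simp

lemma conj_mem (C : Conjugation H) {D : Submodule ℂ H} {x : H} (hx : x ∈ C.conjDomain D) :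
    C x ∈ D := C.mem_of_mem_image hx

/-- The operator `C T C` with domain `C(D(T))`. -/
noncomputable def conjOp (C : Conjugation H) (T : H →ₗ.[ℂ] H) : H →ₗ.[ℂ] H where
  domain := C.conjDomain T.domain
  toFun :=
  { toFun := fun x => C (T ⟨C ↑x, C.conj_mem x.2⟩)
    map_add' := by
      intro x y
      have h : (⟨C ↑(x + y), C.conj_mem (x + y).2⟩ : T.domain)
          = ⟨C ↑x, C.conj_mem x.2⟩ + ⟨C ↑y, C.conj_mem y.2⟩ := by
        apply Subtype.ext; simp [C.map_add']
      try dsimp only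
      rw [h, T.map_add, C.map_add']
    map_smul' := by
      intro c x
      have h : (⟨C ↑(c • x), C.conj_mem (c • x).2⟩ : T.domain)
          = (starRingEnd ℂ c) • (⟨C ↑x, C.conj_mem x.2⟩ : T.domain) := by
        apply Subtype.ext; simp [C.map_smulc]
      try dsimp only
      rw [h, T.map_smul, C.map_smulc]; simp }

/-- `A` is `C`-symmetric: `CAC ⊆ A*`. -/
noncomputable def IsCSymmetric [CompleteSpace H] (C : Conjugation H) (A : H →ₗ.[ℂ] H) : Prop :=
  C.conjOp A ≤ A†

/-- `A` is `C`-self-adjoint: `CAC = A*`. -/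
noncomputable def IsCSelfAdjoint [CompleteSpace H] (C : Conjugation H) (A : H →ₗ.[ℂ] H) : Prop :=
  C.conjOp A = A†

end Conjugation
variable [CompleteSpace H]

open scoped InnerProductSpace in
/-- The kernel `N(I + A*CA*C)`. -/
noncomputable def kerIplusAstarCAstarC (C : Conjugation H) (A : H →ₗ.[ℂ] H) : Set H :=
  {g | ∃ hg : g ∈ (C.conjOp (A†)).domain, ∃ h2 : (C.conjOp (A†)) ⟨g, hg⟩ ∈ (A†).domain,
      g + A† ⟨(C.conjOp (A†)) ⟨g, hg⟩, h2⟩ = 0}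

/-- The kernel `N(I + CA*CA*)`. -/
noncomputable def kerIplusCAstarCAstar (C : Conjugation H) (A : H →ₗ.[ℂ] H) : Set H :=
  {g | ∃ hg : g ∈ (A†).domain, ∃ h2 : A† ⟨g, hg⟩ ∈ (C.conjOp (A†)).domain,
      g + (C.conjOp (A†)) ⟨A† ⟨g, hg⟩, h2⟩ = 0}

/-- The kernel `N(I + A*B*)` where `B = CAC`. -/
noncomputable def kerIplusAstarBstar (C : Conjugation H) (A : H →ₗ.[ℂ] H) : Set H :=
  {g | ∃ hg : g ∈ ((C.conjOp A)†).domain, ∃ h2 : (C.conjOp A)† ⟨g, hg⟩ ∈ (A†).domain,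
      g + A† ⟨(C.conjOp A)† ⟨g, hg⟩, h2⟩ = 0}

open scoped InnerProductSpace in
/-- The orthogonal complement of `S` within `W`, with respect to the graph inner
product `⟪f, g⟫ + ⟪Tf, Tg⟫` of `T`. -/
def graphOrthComplIn (T : H →ₗ.[ℂ] H) (W S : Set H) : Set H :=
  {g | g ∈ W ∧ ∃ hg : g ∈ T.domain, ∀ f ∈ S, ∀ hf : f ∈ T.domain,
      ⟪f, g⟫_ℂ + ⟪T ⟨f, hf⟩, T ⟨g, hg⟩⟫_ℂ = 0}

/-- The deficiency space `N(T* - μ)`. -/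
noncomputable def defectSpace (T : H →ₗ.[ℂ] H) (μ : ℂ) : Submodule ℂ H where
  carrier := {z | ∃ hz : z ∈ (T†).domain, T† ⟨z, hz⟩ = μ • z}
  add_mem' := by
    rintro a b ⟨ha, hva⟩ ⟨hb, hvb⟩
    refine ⟨(T†).domain.add_mem ha hb, ?_⟩
    have h : (⟨a + b, (T†).domain.add_mem ha hb⟩ : (T†).domain) = ⟨a, ha⟩ + ⟨b, hb⟩ := rfl
    rw [h, LinearPMap.map_add, hva, hvb, smul_add]
  zero_mem' := by
    refine ⟨(T†).domain.zero_mem, ?_⟩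
    have h : (⟨(0 : H), (T†).domain.zero_mem⟩ : (T†).domain) = 0 := rfl
    rw [h, LinearPMap.map_zero, smul_zero]
  smul_mem' := by
    rintro c a ⟨ha, hva⟩
    refine ⟨(T†).domain.smul_mem c ha, ?_⟩
    have h : (⟨c • a, (T†).domain.smul_mem c ha⟩ : (T†).domain) = c • ⟨a, ha⟩ := rfl
    rw [h, LinearPMap.map_smul, hva, smul_comm]


open Classical

/-- The map `S_{B*} = A*C` (extended by `0` outside its natural domain). -/
noncomputable def SBfun (C : Conjugation H) (A : H →ₗ.[ℂ] H) : H → H :=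
  fun g => if hg : C g ∈ (A†).domain then A† ⟨C g, hg⟩ else 0

/-- The map `B* = CA*C` (extended by `0` outside its domain). -/
noncomputable def Bstarfun (C : Conjugation H) (A : H →ₗ.[ℂ] H) : H → H :=
  fun g => if hg : g ∈ (C.conjOp (A†)).domain then (C.conjOp (A†)) ⟨g, hg⟩ else 0

namespace Conjugation

variable {E : Type*} [NormedAddCommGroup E] [InnerProductSpace ℂ E]

lemma mem_conjOp_domain_iff (C : Conjugation E) {T : E →ₗ.[ℂ] E} {x : E} :
    x ∈ (C.conjOp T).domain ↔ C x ∈ T.domain :=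
  ⟨C.conj_mem, fun h => ⟨C x, h, C.invol x⟩⟩

lemma map_neg (C : Conjugation E) (x : E) : C (-x) = -C x := by
  simpa using C.map_smulc (-1) x

lemma norm_map (C : Conjugation E) (x : E) : ‖C x‖ = ‖x‖ := by
  rw [norm_eq_sqrt_re_inner (𝕜 := ℂ), norm_eq_sqrt_re_inner (𝕜 := ℂ) x, C.inner_conj]

end Conjugation

section SBfun

variable (C : Conjugation H) (A : H →ₗ.[ℂ] H)

lemma SBfun_of_mem {g : H} (h : C g ∈ (A†).domain) : SBfun C A g = A† ⟨C g, h⟩ :=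
  dif_pos h

lemma Bstarfun_eq_conj_SBfun (g : H) : Bstarfun C A g = C (SBfun C A g) := by
  by_cases h : C g ∈ (A†).domain
  · rw [Bstarfun, dif_pos (C.mem_conjOp_domain_iff.2 h), SBfun_of_mem C A h]
    rfl
  · rw [Bstarfun, SBfun, dif_neg (mt C.mem_conjOp_domain_iff.1 h), dif_neg h, C.map_zero]

lemma SBfun_smul (c : ℂ) {g : H} (h : C g ∈ (A†).domain) :
    SBfun C A (c • g) = starRingEnd ℂ c • SBfun C A g := by
  have hc : C (c • g) ∈ (A†).domain := by
    rw [C.map_smulc]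
    exact (A†).domain.smul_mem _ h
  have hsub : (⟨C (c • g), hc⟩ : (A†).domain) = starRingEnd ℂ c • ⟨C g, h⟩ :=
    Subtype.ext (C.map_smulc c g)
  rw [SBfun_of_mem C A hc, SBfun_of_mem C A h, hsub, LinearPMap.map_smul]

lemma SBfun_neg {g : H} (h : C g ∈ (A†).domain) : SBfun C A (-g) = -SBfun C A g := by
  simpa using SBfun_smul C A (-1) h

lemma SBfun_add {g g' : H} (h : C g ∈ (A†).domain) (h' : C g' ∈ (A†).domain) :
    SBfun C A (g + g') = SBfun C A g + SBfun C A g' := by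
  have hadd : C (g + g') ∈ (A†).domain := by
    rw [C.map_add']
    exact (A†).domain.add_mem h h'
  have hsub : (⟨C (g + g'), hadd⟩ : (A†).domain) = ⟨C g, h⟩ + ⟨C g', h'⟩ :=
    Subtype.ext (C.map_add' g g')
  rw [SBfun_of_mem C A hadd, SBfun_of_mem C A h, SBfun_of_mem C A h', hsub,
    LinearPMap.map_add]

lemma mem_kerIplusAstarCAstarC_iff {g : H} :
    g ∈ kerIplusAstarCAstarC C A ↔
      C g ∈ (A†).domain ∧ C (SBfun C A g) ∈ (A†).domain ∧ SBfun C A (SBfun C A g) = -g := by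
  constructor
  · rintro ⟨hg, h2, hker⟩
    have h1 := C.conj_mem hg
    have hSg : C (SBfun C A g) = C.conjOp (A†) ⟨g, hg⟩ := by rw [SBfun_of_mem C A h1]; rfl
    refine ⟨h1, hSg ▸ h2, ?_⟩
    rw [SBfun_of_mem C A (hSg ▸ h2), ← add_eq_zero_iff_eq_neg']
    convert hker
  · rintro ⟨h1, h2, hSS⟩
    have hg := C.mem_conjOp_domain_iff.2 h1
    have hSg : C.conjOp (A†) ⟨g, hg⟩ = C (SBfun C A g) := by rw [SBfun_of_mem C A h1]; rfl
    refine ⟨hg, hSg ▸ h2, ?_⟩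
    rw [add_eq_zero_iff_eq_neg', ← hSS, SBfun_of_mem C A h2]
    congr 2

variable {C A}

lemma SBfun_SBfun_of_mem {g : H} (hg : g ∈ kerIplusAstarCAstarC C A) :
    SBfun C A (SBfun C A g) = -g :=
  ((mem_kerIplusAstarCAstarC_iff C A).1 hg).2.2

lemma SBfun_mem_kerIplusAstarCAstarC {g : H} (hg : g ∈ kerIplusAstarCAstarC C A) :
    SBfun C A g ∈ kerIplusAstarCAstarC C A := by
  obtain ⟨h1, h2, hSS⟩ := (mem_kerIplusAstarCAstarC_iff C A).1 hg
  refine (mem_kerIplusAstarCAstarC_iff C A).2 ⟨h2, ?_, ?_⟩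
  · rw [hSS, C.map_neg]
    exact (A†).domain.neg_mem h1
  · rw [hSS, SBfun_neg C A h1]

end SBfun

theorem stmt_11_general (C : Conjugation H) (A : H →ₗ.[ℂ] H) :
    (∀ g ∈ kerIplusAstarCAstarC C A, SBfun C A g ∈ kerIplusAstarCAstarC C A)
    ∧ (∀ m ∈ kerIplusAstarCAstarC C A, ∃ g ∈ kerIplusAstarCAstarC C A, SBfun C A g = m)
    ∧ (∀ g ∈ kerIplusAstarCAstarC C A, ∀ g' ∈ kerIplusAstarCAstarC C A,
        SBfun C A (g + g') = SBfun C A g + SBfun C A g')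
    ∧ (∀ (c : ℂ), ∀ g ∈ kerIplusAstarCAstarC C A,
        SBfun C A (c • g) = (starRingEnd ℂ) c • SBfun C A g)
    ∧ (∀ g ∈ kerIplusAstarCAstarC C A,
        ‖SBfun C A g‖ ^ 2 + ‖Bstarfun C A (SBfun C A g)‖ ^ 2
          = ‖g‖ ^ 2 + ‖Bstarfun C A g‖ ^ 2)
    ∧ (∀ g ∈ kerIplusAstarCAstarC C A, SBfun C A (SBfun C A g) = -g) := by
  have hdom {g : H} (hg : g ∈ kerIplusAstarCAstarC C A) : C g ∈ (A†).domain :=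
    ((mem_kerIplusAstarCAstarC_iff C A).1 hg).1
  refine ⟨fun g => SBfun_mem_kerIplusAstarCAstarC, fun m hm => ?_,
    fun g hg g' hg' => SBfun_add C A (hdom hg) (hdom hg'),
    fun c g hg => SBfun_smul C A c (hdom hg), fun g hg => ?_, fun g => SBfun_SBfun_of_mem⟩
  · have hSSm := SBfun_mem_kerIplusAstarCAstarC (SBfun_mem_kerIplusAstarCAstarC hm)
    refine ⟨_, SBfun_mem_kerIplusAstarCAstarC hSSm, ?_⟩
    rw [SBfun_SBfun_of_mem hSSm, SBfun_SBfun_of_mem hm, neg_neg]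
  · rw [Bstarfun_eq_conj_SBfun, Bstarfun_eq_conj_SBfun, SBfun_SBfun_of_mem hg, C.norm_map,
      C.norm_map, norm_neg, add_comm]

theorem stmt_11 (C : Conjugation H) (A : H →ₗ.[ℂ] H) (hA : Dense (A.domain : Set H))
    (hclosed : A.IsClosed) (hsym : C.IsCSymmetric A) :
    (∀ g ∈ kerIplusAstarCAstarC C A, SBfun C A g ∈ kerIplusAstarCAstarC C A)
    ∧ (∀ m ∈ kerIplusAstarCAstarC C A, ∃ g ∈ kerIplusAstarCAstarC C A, SBfun C A g = m)
    ∧ (∀ g ∈ kerIplusAstarCAstarC C A, ∀ g' ∈ kerIplusAstarCAstarC C A,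
        SBfun C A (g + g') = SBfun C A g + SBfun C A g')
    ∧ (∀ (c : ℂ), ∀ g ∈ kerIplusAstarCAstarC C A,
        SBfun C A (c • g) = (starRingEnd ℂ) c • SBfun C A g)
    ∧ (∀ g ∈ kerIplusAstarCAstarC C A,
        ‖SBfun C A g‖ ^ 2 + ‖Bstarfun C A (SBfun C A g)‖ ^ 2
          = ‖g‖ ^ 2 + ‖Bstarfun C A g‖ ^ 2)
    ∧ (∀ g ∈ kerIplusAstarCAstarC C A, SBfun C A (SBfun C A g) = -g) :=
  stmt_11_general C A
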